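/- For every ι ∈ (0,1) and every p ∈ [1,∞), the function u_ι(x) = −(1−|x|)^ι on 𝔹ⁿ satisfies ∫_{𝔹ⁿ} |u_ι(x)|^p dx = n!·ω_n / ((ιp+1)(ιp+2)···(ιp+n)) and ∫_{𝔹ⁿ} F*(x, du_ι(x))^p dx = ι^p · n!·ω_n / ((ιp+1)(ιp+2)···(ιp+n)), where ω_n is the Lebesgue volume of 𝔹ⁿ and du_ι is the differential of u_ι (defined for x ≠ 0). -/

import Mathlib

open MeasureTheory Filter Metric
open scoped Classical RealInnerProductSpace ENNReal Topology

noncomputable section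

/-- The Funk metric on the open Euclidean unit ball. -/
def funkM (n : ℕ) (x y : EuclideanSpace ℝ (Fin n)) : ℝ :=
  (Real.sqrt ((1 - ‖x‖ ^ 2) * ‖y‖ ^ 2 + ⟪x, y⟫ ^ 2) + ⟪x, y⟫) / (1 - ‖x‖ ^ 2)

/-- The co-metric of the Funk metric: `F*(x,ξ) = sup_{y ≠ 0} ⟨ξ, y⟩ / F(x,y)`. -/
def funkCo (n : ℕ) (x ξ : EuclideanSpace ℝ (Fin n)) : ℝ :=
  ⨆ y : {y : EuclideanSpace ℝ (Fin n) // y ≠ 0},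
    ⟪ξ, (y : EuclideanSpace ℝ (Fin n))⟫ / funkM n x (y : EuclideanSpace ℝ (Fin n))

/-- The test function `u_ι(x) = -(1-‖x‖)^ι` on the unit ball. -/
def uFunk (n : ℕ) (ι : ℝ) (x : EuclideanSpace ℝ (Fin n)) : ℝ := -((1 - ‖x‖) ^ ι)

/-! ### Auxiliary lemmas -/

lemma gamma_shift (q : ℝ) (hq : 0 < q) (n : ℕ) :
    Real.Gamma (q + 1 + n) = (∏ j ∈ Finset.range n, (q + 1 + j)) * Real.Gamma (q + 1) := by
  induction n with
  | zero => simp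
  | succ m ih =>
    have h1 : q + 1 + (m + 1 : ℕ) = (q + 1 + m) + 1 := by push_cast; ring
    rw [h1, Real.Gamma_add_one (by positivity), ih, Finset.prod_range_succ]
    ring

lemma beta_1d' (n : ℕ) (hn : 1 ≤ n) (q : ℝ) (hq : 0 < q) :
    ∫ x in (0:ℝ)..1, x ^ (n - 1) * (1 - x) ^ q =
      ((n - 1).factorial : ℝ) / ∏ j ∈ Finset.range n, (q + 1 + j) := by
  have hB : Complex.betaIntegral n (q + 1) =
      ((∫ x in (0:ℝ)..1, x ^ (n - 1) * (1 - x) ^ q : ℝ) : ℂ) := by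
    rw [Complex.betaIntegral, ← intervalIntegral.integral_ofReal]
    apply intervalIntegral.integral_congr
    intro x hx
    rw [Set.uIcc_of_le (by norm_num : (0:ℝ) ≤ 1)] at hx
    obtain ⟨hx0, hx1⟩ := hx
    have h1 : ((n : ℂ) - 1) = ((n - 1 : ℕ) : ℂ) := by
      push_cast [Nat.cast_sub hn]; ring
    have h2 : ((q : ℂ) + 1 - 1) = (q : ℂ) := by ring
    simp only [h1, h2]
    rw [Complex.cpow_natCast, show ((1:ℂ) - x) = ((1 - x : ℝ) : ℂ) by push_cast; ring,
      ← Complex.ofReal_cpow (by linarith : (0:ℝ) ≤ 1 - x),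
      Complex.ofReal_mul, Complex.ofReal_pow]
  have hg : Complex.Gamma n * Complex.Gamma (q + 1) =
      Complex.Gamma (n + (q + 1)) * Complex.betaIntegral n (q + 1) :=
    Complex.Gamma_mul_Gamma_eq_betaIntegral (by simp; positivity)
      (by simp [Complex.add_re]; positivity)
  have hc : ((n : ℂ) + ((q : ℂ) + 1)) = (((n : ℝ) + (q + 1) : ℝ) : ℂ) := by push_cast; ring
  have hcn : ((n : ℂ)) = (((n : ℝ) : ℝ) : ℂ) := by push_cast; ring
  have hcq : ((q : ℂ) + 1) = (((q + 1 : ℝ) : ℝ) : ℂ) := by push_cast; ring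
  rw [hB, hc, hcn, hcq, Complex.Gamma_ofReal, Complex.Gamma_ofReal, Complex.Gamma_ofReal] at hg
  have hΓs : 0 < Real.Gamma ((n : ℝ) + (q + 1)) := Real.Gamma_pos_of_pos (by positivity)
  have hΓq : 0 < Real.Gamma (q + 1) := Real.Gamma_pos_of_pos (by positivity)
  have hreal : Real.Gamma n * Real.Gamma (q + 1) =
      Real.Gamma ((n : ℝ) + (q + 1)) * ∫ x in (0:ℝ)..1, x ^ (n - 1) * (1 - x) ^ q := by
    exact_mod_cast hg
  have hgn : Real.Gamma n = ((n - 1).factorial : ℝ) := by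
    have : (n : ℝ) = ((n - 1 : ℕ) : ℝ) + 1 := by
      have := Nat.cast_sub (R := ℝ) hn; push_cast at this ⊢; linarith
    rw [this, Real.Gamma_nat_eq_factorial]
  have hgs : Real.Gamma ((n : ℝ) + (q + 1)) =
      (∏ j ∈ Finset.range n, (q + 1 + j)) * Real.Gamma (q + 1) := by
    rw [show (n : ℝ) + (q + 1) = q + 1 + n by ring, gamma_shift q hq]
  have hprod : 0 < ∏ j ∈ Finset.range n, (q + 1 + (j : ℝ)) :=
    Finset.prod_pos fun j _ => by positivity
  rw [hgn, hgs] at hreal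
  field_simp
  nlinarith [hreal, hprod, hΓq]

lemma ball_integral (n : ℕ) (hn : 2 ≤ n) (q : ℝ) (hq : 0 < q) :
    ∫ x in ball (0 : EuclideanSpace ℝ (Fin n)) 1, (1 - ‖x‖) ^ q =
      (n.factorial : ℝ) * (volume (ball (0 : EuclideanSpace ℝ (Fin n)) 1)).toReal /
        ∏ j ∈ Finset.range n, (q + 1 + j) := by
  haveI : Nontrivial (EuclideanSpace ℝ (Fin n)) :=
    nontrivial_of_ne (EuclideanSpace.single ⟨0, by omega⟩ (1:ℝ)) 0 (by
      intro h
      have := congrArg (fun v : EuclideanSpace ℝ (Fin n) => v ⟨0, by omega⟩) h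
      simp [EuclideanSpace.single_apply] at this)
  set f : ℝ → ℝ := fun r => (max (1 - r) 0) ^ q with hf
  have hcf : Continuous f := by
    apply Continuous.rpow_const
    · exact (continuous_const.sub continuous_id).max continuous_const
    · exact fun x => Or.inr hq.le
  have h1 : ∀ x : EuclideanSpace ℝ (Fin n),
      (ball (0 : EuclideanSpace ℝ (Fin n)) 1).indicator
        (fun x => (1 - ‖x‖) ^ q) x = f ‖x‖ := by
    intro x
    by_cases hx : x ∈ ball (0 : EuclideanSpace ℝ (Fin n)) 1
    · rw [Set.indicator_of_mem hx]
      rw [mem_ball_zero_iff] at hx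
      simp only [hf]
      rw [max_eq_left (by linarith)]
    · rw [Set.indicator_of_notMem hx]
      rw [mem_ball_zero_iff, not_lt] at hx
      simp only [hf]
      rw [max_eq_right (by linarith), Real.zero_rpow hq.ne']
  have h2 : ∫ x in ball (0 : EuclideanSpace ℝ (Fin n)) 1, (1 - ‖x‖) ^ q
      = ∫ x : EuclideanSpace ℝ (Fin n), f ‖x‖ := by
    rw [← integral_indicator measurableSet_ball]
    exact integral_congr_ae (Filter.Eventually.of_forall h1)
  rw [h2, integral_fun_norm_addHaar volume f, finrank_euclideanSpace_fin]
  have h3 : ∫ y in Set.Ioi (0:ℝ), y ^ (n - 1) • f y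
      = ∫ x in (0:ℝ)..1, x ^ (n - 1) * (1 - x) ^ q := by
    have hsplit : Set.Ioc (0:ℝ) 1 ∪ Set.Ioi 1 = Set.Ioi 0 :=
      Set.Ioc_union_Ioi_eq_Ioi (by norm_num)
    have hg : Continuous fun y : ℝ => y ^ (n - 1) * f y :=
      (continuous_pow _).mul hcf
    have hzero : ∀ y ∈ Set.Ioi (1:ℝ), y ^ (n - 1) * f y = 0 := by
      intro y hy
      simp only [Set.mem_Ioi] at hy
      simp only [hf]
      rw [max_eq_right (by linarith), Real.zero_rpow hq.ne', mul_zero]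
    simp only [smul_eq_mul]
    rw [← hsplit, setIntegral_union (Set.Ioc_disjoint_Ioi le_rfl) measurableSet_Ioi
      (hg.integrableOn_Ioc)
      ((integrableOn_congr_fun hzero measurableSet_Ioi).mpr (integrableOn_zero))]
    rw [setIntegral_congr_fun measurableSet_Ioi hzero, integral_zero, add_zero,
      intervalIntegral.integral_of_le (by norm_num : (0:ℝ) ≤ 1)]
    apply setIntegral_congr_fun measurableSet_Ioc
    intro y hy
    simp only [Set.mem_Ioc] at hy
    simp only [smul_eq_mul, hf]
    rw [max_eq_left (by linarith)]
  rw [h3, beta_1d' n (by omega) q hq]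
  rw [nsmul_eq_mul, smul_eq_mul]
  have h4 : (n : ℝ) * ((n-1).factorial : ℝ) = (n.factorial : ℝ) := by
    rw_mod_cast [Nat.mul_factorial_pred (by omega)]
  rw [← h4]
  simp only [measureReal_def]
  ring

lemma hasFDerivAt_norm' {E : Type*} [NormedAddCommGroup E] [InnerProductSpace ℝ E]
    (x : E) (hx : x ≠ 0) :
    HasFDerivAt (fun y : E => ‖y‖) (‖x‖⁻¹ • innerSL ℝ x) x := by
  have h0 : ⟪x, x⟫ ≠ 0 := inner_self_ne_zero.mpr hx
  have h1 := (hasFDerivAt_id x).inner ℝ (hasFDerivAt_id x)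
  have h1' : HasFDerivAt (fun t : E => ⟪t, t⟫)
      ((fderivInnerCLM ℝ (x, x)).comp
        ((ContinuousLinearMap.id ℝ E).prod (ContinuousLinearMap.id ℝ E))) x := h1
  have h2 := (Real.hasDerivAt_sqrt h0).comp_hasFDerivAt (f := fun t : E => ⟪t, t⟫) x h1'
  have hfun : (fun y : E => ‖y‖) = fun y : E => Real.sqrt ⟪y, y⟫ :=
    funext fun y => norm_eq_sqrt_real_inner y
  rw [hfun]
  refine h2.congr_fderiv ?_
  ext v
  simp only [ContinuousLinearMap.smul_apply, innerSL_apply_apply, ContinuousLinearMap.coe_comp',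
    Function.comp_apply, fderivInnerCLM_apply, ContinuousLinearMap.prod_apply,
    ContinuousLinearMap.coe_id', id_eq, smul_eq_mul]
  rw [← norm_eq_sqrt_real_inner x, real_inner_comm v x]
  have hnx : ‖x‖ ≠ 0 := norm_ne_zero_iff.mpr hx
  field_simp
  ring

lemma hasGradient_uFunk (n : ℕ) (ι : ℝ) (x : EuclideanSpace ℝ (Fin n))
    (hx0 : x ≠ 0) (hx1 : ‖x‖ < 1) :
    HasGradientAt (uFunk n ι) ((ι * (1 - ‖x‖) ^ (ι - 1) / ‖x‖) • x) x := by
  have hb : (1:ℝ) - ‖x‖ ≠ 0 := by intro h; linarith [hx1]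
  have hφ : HasDerivAt (fun t : ℝ => -((1 - t) ^ ι)) (ι * (1 - ‖x‖) ^ (ι - 1)) ‖x‖ := by
    have h3 : HasDerivAt (fun t : ℝ => 1 - t) (-1) ‖x‖ := (hasDerivAt_id ‖x‖).const_sub 1
    have h4 := ((Real.hasDerivAt_rpow_const (p := ι) (Or.inl hb)).comp ‖x‖ h3).neg
    refine h4.congr_deriv ?_
    ring
  have hcomp := hφ.comp_hasFDerivAt x (hasFDerivAt_norm' x hx0)
  have hgoal : HasFDerivAt (uFunk n ι)
      ((ι * (1 - ‖x‖) ^ (ι - 1)) • (‖x‖⁻¹ • innerSL ℝ x)) x := hcomp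
  rw [hasGradientAt_iff_hasFDerivAt]
  refine hgoal.congr_fderiv ?_
  ext v
  have hnx : ‖x‖ ≠ 0 := norm_ne_zero_iff.mpr hx0
  simp only [InnerProductSpace.toDual_apply_apply, ContinuousLinearMap.smul_apply, innerSL_apply_apply,
    smul_eq_mul, real_inner_smul_left]
  field_simp

lemma funkCo_eq (n : ℕ) (x ξ : EuclideanSpace ℝ (Fin n)) (hx : ‖x‖ < 1) (hξ : ξ ≠ 0) :
    funkCo n x ξ = ‖ξ‖ - ⟪x, ξ⟫ := by
  have hA : 0 < 1 - ‖x‖ ^ 2 := by nlinarith [norm_nonneg x]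
  have hub : ∀ y : EuclideanSpace ℝ (Fin n), y ≠ 0 →
      ⟪ξ, y⟫ / funkM n x y ≤ ‖ξ‖ - ⟪x, ξ⟫ := by
    intro y hy
    set a := ⟪x, y⟫ with ha
    set s := Real.sqrt ((1 - ‖x‖ ^ 2) * ‖y‖ ^ 2 + a ^ 2) with hs
    have hs2 : s ^ 2 = (1 - ‖x‖ ^ 2) * ‖y‖ ^ 2 + a ^ 2 := Real.sq_sqrt (by positivity)
    have hs0 : 0 ≤ s := Real.sqrt_nonneg _
    have hy2 : 0 < ‖y‖ ^ 2 := by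
      have : ‖y‖ ≠ 0 := norm_ne_zero_iff.mpr hy
      positivity
    have hsa : 0 < s + a := by nlinarith [hs2, hy2, hA, hs0]
    have hF : funkM n x y = (s + a) / (1 - ‖x‖ ^ 2) := rfl
    have hFpos : 0 < funkM n x y := by rw [hF]; positivity
    rw [div_le_iff₀ hFpos]
    set F := funkM n x y with hFdef
    have hFA : F * (1 - ‖x‖ ^ 2) = s + a := by
      rw [hF]; field_simp
    have hkey : F ^ 2 * (1 - ‖x‖ ^ 2) = 2 * a * F + ‖y‖ ^ 2 := by
      have h1 : (F * (1 - ‖x‖ ^ 2) - a) ^ 2 = s ^ 2 := by rw [hFA]; ring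
      rw [hs2] at h1
      have h2 : (1 - ‖x‖ ^ 2) * (F ^ 2 * (1 - ‖x‖ ^ 2) - 2 * a * F) =
          (1 - ‖x‖ ^ 2) * ‖y‖ ^ 2 := by linear_combination h1
      have h3 := mul_left_cancel₀ hA.ne' h2
      linarith
    have hz : ‖x + F⁻¹ • y‖ = 1 := by
      have h2 : ‖x + F⁻¹ • y‖ ^ 2 = 1 := by
        rw [norm_add_sq_real, real_inner_smul_right, ← ha, norm_smul, Real.norm_eq_abs,
          abs_of_pos (inv_pos.mpr hFpos)]
        have hFne : F ≠ 0 := hFpos.ne'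
        field_simp
        linear_combination (-1:ℝ) * hkey
      rw [← Real.sqrt_sq (norm_nonneg _), h2, Real.sqrt_one]
    have hic : ⟪ξ, x + F⁻¹ • y⟫ ≤ ‖ξ‖ := by
      have := real_inner_le_norm ξ (x + F⁻¹ • y)
      rwa [hz, mul_one] at this
    calc ⟪ξ, y⟫ = F * (⟪ξ, x + F⁻¹ • y⟫ - ⟪ξ, x⟫) := by
          rw [inner_add_right, real_inner_smul_right]
          have hFne : F ≠ 0 := hFpos.ne'
          field_simp
          ring
      _ ≤ F * (‖ξ‖ - ⟪ξ, x⟫) := by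
          apply mul_le_mul_of_nonneg_left _ hFpos.le
          linarith [hic]
      _ = (‖ξ‖ - ⟪x, ξ⟫) * F := by rw [real_inner_comm ξ x]; ring
  set z := ‖ξ‖⁻¹ • ξ with hzdef
  have hξn : ‖ξ‖ ≠ 0 := norm_ne_zero_iff.mpr hξ
  have hz1 : ‖z‖ = 1 := by
    rw [hzdef, norm_smul, Real.norm_eq_abs, abs_of_pos (by positivity : (0:ℝ) < ‖ξ‖⁻¹)]
    field_simp
  set y₀ := z - x with hy₀def
  have hy₀ : y₀ ≠ 0 := by
    intro h
    rw [hy₀def, sub_eq_zero] at h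
    rw [← h, hz1] at hx
    exact lt_irrefl _ hx
  have ht : ⟪x, z⟫ ≤ ‖x‖ := by
    have := real_inner_le_norm x z
    rwa [hz1, mul_one] at this
  have hF1 : funkM n x y₀ = 1 := by
    have ha : ⟪x, z - x⟫ = ⟪x, z⟫ - ‖x‖ ^ 2 := by
      rw [inner_sub_right, real_inner_self_eq_norm_sq]
    have hn2 : ‖z - x‖ ^ 2 = 1 - 2 * ⟪x, z⟫ + ‖x‖ ^ 2 := by
      rw [norm_sub_sq_real, hz1, real_inner_comm z x]; ring
    have hAa : (1 - ‖x‖ ^ 2) * ‖z - x‖ ^ 2 + ⟪x, z - x⟫ ^ 2 = (1 - ⟪x, z⟫) ^ 2 := by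
      rw [ha, hn2]; ring
    rw [funkM]
    rw [hy₀def, hAa, Real.sqrt_sq (by linarith : (0:ℝ) ≤ 1 - ⟪x, z⟫), ha]
    field_simp
    ring
  have hval : ⟪ξ, y₀⟫ = ‖ξ‖ - ⟪x, ξ⟫ := by
    rw [hy₀def, inner_sub_right, hzdef, real_inner_smul_right,
      real_inner_self_eq_norm_sq, real_inner_comm ξ x]
    field_simp
  haveI : Nonempty {y : EuclideanSpace ℝ (Fin n) // y ≠ 0} := ⟨⟨y₀, hy₀⟩⟩
  have hbdd : BddAbove (Set.range fun y : {y : EuclideanSpace ℝ (Fin n) // y ≠ 0} =>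
      ⟪ξ, (y : EuclideanSpace ℝ (Fin n))⟫ / funkM n x (y : EuclideanSpace ℝ (Fin n))) := by
    refine ⟨‖ξ‖ - ⟪x, ξ⟫, ?_⟩
    rintro _ ⟨y, rfl⟩
    exact hub y.1 y.2
  apply le_antisymm
  · exact ciSup_le fun y => hub y.1 y.2
  · have heq : ‖ξ‖ - ⟪x, ξ⟫ = ⟪ξ, y₀⟫ / funkM n x y₀ := by rw [hF1, div_one, hval]
    rw [funkCo, heq]
    exact le_ciSup hbdd ⟨y₀, hy₀⟩

/-- For `ι ∈ (0,1)` and `p ∈ [1,∞)`, the function `u_ι(x) = -(1-‖x‖)^ι` satisfies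
`∫ |u_ι|^p = n! ω_n / ((ιp+1)⋯(ιp+n))` and
`∫ F*(x,du_ι)^p = ι^p n! ω_n / ((ιp+1)⋯(ιp+n))`. -/
theorem funk_test_function_integrals (n : ℕ) (hn : 2 ≤ n)
    (ι : ℝ) (hι0 : 0 < ι) (hι1 : ι < 1) (p : ℝ) (hp : 1 ≤ p) :
    (∫ x in ball (0 : EuclideanSpace ℝ (Fin n)) 1, |uFunk n ι x| ^ p) =
      (n.factorial : ℝ) * (volume (ball (0 : EuclideanSpace ℝ (Fin n)) 1)).toReal /
        (∏ j ∈ Finset.range n, (ι * p + ((j : ℝ) + 1))) ∧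
    (∫ x in ball (0 : EuclideanSpace ℝ (Fin n)) 1,
        (funkCo n x (gradient (uFunk n ι) x)) ^ p) =
      ι ^ p * (n.factorial : ℝ) *
          (volume (ball (0 : EuclideanSpace ℝ (Fin n)) 1)).toReal /
        (∏ j ∈ Finset.range n, (ι * p + ((j : ℝ) + 1))) := by
  haveI : Nontrivial (EuclideanSpace ℝ (Fin n)) :=
    nontrivial_of_ne (EuclideanSpace.single ⟨0, by omega⟩ (1:ℝ)) 0 (by
      intro h
      have := congrArg (fun v : EuclideanSpace ℝ (Fin n) => v ⟨0, by omega⟩) h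
      simp [EuclideanSpace.single_apply] at this)
  have hq : 0 < ι * p := mul_pos hι0 (by linarith)
  have hprodeq : (∏ j ∈ Finset.range n, (ι * p + ((j : ℝ) + 1))) =
      ∏ j ∈ Finset.range n, (ι * p + 1 + (j : ℝ)) :=
    Finset.prod_congr rfl fun j _ => by ring
  constructor
  · rw [hprodeq, ← ball_integral n hn (ι * p) hq]
    apply setIntegral_congr_fun measurableSet_ball
    intro x hx
    rw [mem_ball_zero_iff] at hx
    have h1 : (0:ℝ) ≤ 1 - ‖x‖ := by linarith
    simp only [uFunk, abs_neg, abs_of_nonneg (Real.rpow_nonneg h1 ι)]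
    rw [← Real.rpow_mul h1]
  · have hι : ι ^ p = ι ^ p := rfl
    have hae : ∀ᵐ x : EuclideanSpace ℝ (Fin n) ∂volume,
        x ∈ ball (0 : EuclideanSpace ℝ (Fin n)) 1 →
        (funkCo n x (gradient (uFunk n ι) x)) ^ p = ι ^ p * (1 - ‖x‖) ^ (ι * p) := by
      have h0 : ∀ᵐ x : EuclideanSpace ℝ (Fin n) ∂volume, x ≠ 0 := by
        rw [ae_iff]
        simpa using measure_singleton (0 : EuclideanSpace ℝ (Fin n))
      filter_upwards [h0] with x hx0 hx
      rw [mem_ball_zero_iff] at hx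
      have hnx : (0:ℝ) < ‖x‖ := norm_pos_iff.mpr hx0
      have hb : (0:ℝ) < 1 - ‖x‖ := by linarith
      set c := ι * (1 - ‖x‖) ^ (ι - 1) / ‖x‖ with hc
      have hcpos : 0 < c := by
        rw [hc]
        have := Real.rpow_pos_of_pos hb (ι - 1)
        positivity
      have hgrad : gradient (uFunk n ι) x = c • x :=
        (hasGradient_uFunk n ι x hx0 hx).gradient
      have hξne : c • x ≠ 0 := smul_ne_zero hcpos.ne' hx0
      have hnorm : ‖c • x‖ = ι * (1 - ‖x‖) ^ (ι - 1) := by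
        rw [norm_smul, Real.norm_eq_abs, abs_of_pos hcpos, hc]
        field_simp
      have hinner : ⟪x, c • x⟫ = ι * (1 - ‖x‖) ^ (ι - 1) * ‖x‖ := by
        rw [real_inner_smul_right, real_inner_self_eq_norm_sq, hc]
        field_simp
      rw [hgrad, funkCo_eq n x (c • x) hx hξne, hnorm, hinner]
      have hval : ι * (1 - ‖x‖) ^ (ι - 1) - ι * (1 - ‖x‖) ^ (ι - 1) * ‖x‖
          = ι * (1 - ‖x‖) ^ ι := by
        have : (1 - ‖x‖) ^ ι = (1 - ‖x‖) ^ (ι - 1) * (1 - ‖x‖) := by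
          rw [← Real.rpow_add_one hb.ne' (ι - 1)]
          norm_num
        rw [this]
        ring
      rw [hval, Real.mul_rpow hι0.le (Real.rpow_nonneg hb.le ι), ← Real.rpow_mul hb.le]
    rw [setIntegral_congr_ae measurableSet_ball hae, integral_const_mul,
      hprodeq, ball_integral n hn (ι * p) hq]
    ring
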